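/- Let (𝔞, α, β) be a multiplicative Hom-Lie antialgebra over a field k of characteristic 0, let ω = (ω₀, ω₁, ω₂) generate a 1-parameter deformation (x₁ ·_t x₂ = x₁·x₂ + tω₀(x₁,x₂), x₁ ·_t y₁ = x₁·y₁ + tω₁(x₁,y₁), [y₁,y₂]_t = [y₁,y₂] + tω₂(y₁,y₂)), and let φ₀ : 𝔞₀ → 𝔞₀, φ₁ : 𝔞₁ → 𝔞₁ be linear maps such that for every t ∈ k the maps φ₀ᵗ = id + tφ₀, φ₁ᵗ = id + tφ₁ satisfy φ₀ᵗ(x₁ ·_t x₂) = φ₀ᵗ(x₁)·φ₀ᵗ(x₂), φ₁ᵗ(x₁ ·_t y₁) = φ₀ᵗ(x₁)·φ₁ᵗ(y₁), and φ₀ᵗ([y₁,y₂]_t) = [φ₁ᵗ(y₁), φ₁ᵗ(y₂)] (i.e. the deformation is trivial via φ). Then: ω₀(x₁,x₂) = x₁·φ₀(x₂) + φ₀(x₁)·x₂ − φ₀(x₁·x₂), ω₁(x₁,y₁) = x₁·φ₁(y₁) + φ₀(x₁)·y₁ − φ₁(x₁·y₁), ω₂(y₁,y₂) = [y₁, φ₁(y₂)]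 + [φ₁(y₁), y₂] − φ₀([y₁,y₂]), and (φ₀, φ₁) is a Nijenhuis operator, i.e. satisfies conditions (N1)–(N3). -/
import Mathlib


/-- A multiplicative Hom-Lie antialgebra over `k`: an even part `A0` with a symmetric
product `m0`, an odd part `A1` with an action `m1 : A0 → A1 → A1` and an antisymmetric
bracket `br : A1 → A1 → A0`, together with linear structure maps `al : A0 → A0` and
`be : A1 → A1` satisfying the axioms (HA1)-(HA4) and multiplicativity. -/
structure MHLA (k : Type*) [Field k] (A0 A1 : Type*)
    [AddCommGroup A0] [Module k A0] [AddCommGroup A1] [Module k A1] where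
  m0 : A0 →ₗ[k] A0 →ₗ[k] A0
  m1 : A0 →ₗ[k] A1 →ₗ[k] A1
  br : A1 →ₗ[k] A1 →ₗ[k] A0
  al : A0 →ₗ[k] A0
  be : A1 →ₗ[k] A1
  m0_comm : ∀ x1 x2, m0 x1 x2 = m0 x2 x1
  br_anti : ∀ y1 y2, br y1 y2 = - br y2 y1
  ha1 : ∀ x1 x2 x3, m0 (al x1) (m0 x2 x3) = m0 (m0 x1 x2) (al x3)
  ha2 : ∀ x1 x2 y1, m1 (al x1) (m1 x2 y1) = ((1:k)/2) • m1 (m0 x1 x2) (be y1)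
  ha3 : ∀ x1 y1 y2, m0 (al x1) (br y1 y2) = br (m1 x1 y1) (be y2) + br (be y1) (m1 x1 y2)
  ha4 : ∀ y1 y2 y3, m1 (br y2 y3) (be y1) + m1 (br y3 y1) (be y2) + m1 (br y1 y2) (be y3) = 0
  mul_al : ∀ x1 x2, al (m0 x1 x2) = m0 (al x1) (al x2)
  mul_be : ∀ x1 y1, be (m1 x1 y1) = m1 (al x1) (be y1)
  mul_br : ∀ y1 y2, al (br y1 y2) = br (be y1) (be y2)

variable {k : Type*} [Field k] [CharZero k]
variable {A0 A1 : Type*}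
  [AddCommGroup A0] [Module k A0] [AddCommGroup A1] [Module k A1]

/-- Deformed even product `x₁ ·_t x₂ = x₁·x₂ + t ω₀(x₁,x₂)`. -/
def dM0 (a : MHLA k A0 A1) (w0 : A0 →ₗ[k] A0 →ₗ[k] A0) (t : k) : A0 → A0 → A0 :=
  fun x1 x2 => a.m0 x1 x2 + t • w0 x1 x2

/-- Deformed even-odd product `x₁ ·_t y₁ = x₁·y₁ + t ω₁(x₁,y₁)`. -/
def dM1 (a : MHLA k A0 A1) (w1 : A0 →ₗ[k] A1 →ₗ[k] A1) (t : k) : A0 → A1 → A1 :=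
  fun x1 y1 => a.m1 x1 y1 + t • w1 x1 y1

/-- Deformed bracket `[y₁,y₂]_t = [y₁,y₂] + t ω₂(y₁,y₂)`. -/
def dBr (a : MHLA k A0 A1) (w2 : A1 →ₗ[k] A1 →ₗ[k] A0) (t : k) : A1 → A1 → A0 :=
  fun y1 y2 => a.br y1 y2 + t • w2 y1 y2


private lemma cancel_AB {k : Type*} [Field k] [CharZero k] {M : Type*}
    [AddCommGroup M] [Module k M] (A B : M)
    (h1 : A + B = 0) (h2 : -A + B = 0) : A = 0 ∧ B = 0 := by
  have hB : (2:k) • B = 0 := by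
    have := congrArg₂ (· + ·) h1 h2
    simp only [add_zero] at this
    rw [two_smul]
    linear_combination (norm := abel) this
  have hB0 : B = 0 := by
    have h2ne : (2:k) ≠ 0 := two_ne_zero
    simpa [smul_smul, h2ne] using congrArg (fun z => ((2:k)⁻¹) • z) hB
  constructor
  · have := h1; rw [hB0, add_zero] at this; exact this
  · exact hB0

/-- STATEMENT 15: if `(ω₀, ω₁, ω₂)` generates a 1-parameter infinitesimal deformation of
the multiplicative Hom-Lie antialgebra `𝔞` which is trivial via `φ = (φ₀, φ₁)`
(i.e. `φᵗ = id + tφ : 𝔞_t → 𝔞` is a homomorphism for every `t`), then `ω` is the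
coboundary of `φ`, and `(φ₀, φ₁)` is a Nijenhuis operator (conditions (N1)-(N3)). -/
theorem trivial_deformation_gives_nijenhuis
    (a : MHLA k A0 A1)
    (w0 : A0 →ₗ[k] A0 →ₗ[k] A0) (w1 : A0 →ₗ[k] A1 →ₗ[k] A1) (w2 : A1 →ₗ[k] A1 →ₗ[k] A0)
    -- ω generates a 1-parameter infinitesimal deformation of 𝔞
    (hdef : ∀ t : k,
      (∀ x1 x2, dM0 a w0 t x1 x2 = dM0 a w0 t x2 x1) ∧
      (∀ y1 y2, dBr a w2 t y1 y2 = - dBr a w2 t y2 y1) ∧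
      (∀ x1 x2 x3, dM0 a w0 t (a.al x1) (dM0 a w0 t x2 x3)
        = dM0 a w0 t (dM0 a w0 t x1 x2) (a.al x3)) ∧
      (∀ x1 x2 y1, dM1 a w1 t (a.al x1) (dM1 a w1 t x2 y1)
        = ((1:k)/2) • dM1 a w1 t (dM0 a w0 t x1 x2) (a.be y1)) ∧
      (∀ x1 y1 y2, dM0 a w0 t (a.al x1) (dBr a w2 t y1 y2)
        = dBr a w2 t (dM1 a w1 t x1 y1) (a.be y2) + dBr a w2 t (a.be y1) (dM1 a w1 t x1 y2)) ∧
      (∀ y1 y2 y3, dM1 a w1 t (dBr a w2 t y2 y3) (a.be y1)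
        + dM1 a w1 t (dBr a w2 t y3 y1) (a.be y2)
        + dM1 a w1 t (dBr a w2 t y1 y2) (a.be y3) = 0) ∧
      (∀ x1 x2, a.al (dM0 a w0 t x1 x2) = dM0 a w0 t (a.al x1) (a.al x2)) ∧
      (∀ x1 y1, a.be (dM1 a w1 t x1 y1) = dM1 a w1 t (a.al x1) (a.be y1)) ∧
      (∀ y1 y2, a.al (dBr a w2 t y1 y2) = dBr a w2 t (a.be y1) (a.be y2)))
    (φ0 : A0 →ₗ[k] A0) (φ1 : A1 →ₗ[k] A1)
    -- the deformation is trivial via φᵗ = id + tφ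
    (hphi0 : ∀ (t : k) (x1 x2 : A0),
      dM0 a w0 t x1 x2 + t • φ0 (dM0 a w0 t x1 x2)
        = a.m0 (x1 + t • φ0 x1) (x2 + t • φ0 x2))
    (hphi1 : ∀ (t : k) (x1 : A0) (y1 : A1),
      dM1 a w1 t x1 y1 + t • φ1 (dM1 a w1 t x1 y1)
        = a.m1 (x1 + t • φ0 x1) (y1 + t • φ1 y1))
    (hphi2 : ∀ (t : k) (y1 y2 : A1),
      dBr a w2 t y1 y2 + t • φ0 (dBr a w2 t y1 y2)
        = a.br (y1 + t • φ1 y1) (y2 + t • φ1 y2)) :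
    -- ω is the coboundary of φ
    (∀ x1 x2, w0 x1 x2 = a.m0 x1 (φ0 x2) + a.m0 (φ0 x1) x2 - φ0 (a.m0 x1 x2)) ∧
    (∀ x1 y1, w1 x1 y1 = a.m1 x1 (φ1 y1) + a.m1 (φ0 x1) y1 - φ1 (a.m1 x1 y1)) ∧
    (∀ y1 y2, w2 y1 y2 = a.br y1 (φ1 y2) + a.br (φ1 y1) y2 - φ0 (a.br y1 y2)) ∧
    -- (N1)
    (∀ x1 x2, a.m0 (φ0 x1) (φ0 x2)
      = φ0 (a.m0 x1 (φ0 x2)) + φ0 (a.m0 (φ0 x1) x2) - φ0 (φ0 (a.m0 x1 x2))) ∧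
    -- (N2)
    (∀ x y, a.m1 (φ0 x) (φ1 y)
      = φ1 (a.m1 x (φ1 y)) + φ1 (a.m1 (φ0 x) y) - φ1 (φ1 (a.m1 x y))) ∧
    -- (N3)
    (∀ y1 y2, a.br (φ1 y1) (φ1 y2)
      = φ0 (a.br y1 (φ1 y2)) + φ0 (a.br (φ1 y1) y2) - φ0 (φ0 (a.br y1 y2))) := by
  
  -- extract the two key identities from each hphi hypothesis
  have key0 : ∀ x1 x2, (w0 x1 x2 + φ0 (a.m0 x1 x2) - a.m0 x1 (φ0 x2) - a.m0 (φ0 x1) x2 = 0)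
      ∧ (φ0 (w0 x1 x2) - a.m0 (φ0 x1) (φ0 x2) = 0) := by
    intro x1 x2
    have e1 := hphi0 1 x1 x2
    have e2 := hphi0 (-1) x1 x2
    simp only [dM0, map_add, map_smul, one_smul, neg_smul, map_neg, neg_neg, LinearMap.add_apply, LinearMap.neg_apply, LinearMap.smul_apply] at e1 e2
    exact cancel_AB (k := k) _ _ (by linear_combination (norm := module) e1)
      (by linear_combination (norm := module) e2)
  have key1 : ∀ x1 y1, (w1 x1 y1 + φ1 (a.m1 x1 y1) - a.m1 x1 (φ1 y1) - a.m1 (φ0 x1) y1 = 0)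
      ∧ (φ1 (w1 x1 y1) - a.m1 (φ0 x1) (φ1 y1) = 0) := by
    intro x1 y1
    have e1 := hphi1 1 x1 y1
    have e2 := hphi1 (-1) x1 y1
    simp only [dM1, map_add, map_smul, one_smul, neg_smul, map_neg, neg_neg, LinearMap.add_apply, LinearMap.neg_apply, LinearMap.smul_apply] at e1 e2
    exact cancel_AB (k := k) _ _ (by linear_combination (norm := module) e1)
      (by linear_combination (norm := module) e2)
  have key2 : ∀ y1 y2, (w2 y1 y2 + φ0 (a.br y1 y2) - a.br y1 (φ1 y2) - a.br (φ1 y1) y2 = 0)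
      ∧ (φ0 (w2 y1 y2) - a.br (φ1 y1) (φ1 y2) = 0) := by
    intro y1 y2
    have e1 := hphi2 1 y1 y2
    have e2 := hphi2 (-1) y1 y2
    simp only [dBr, map_add, map_smul, one_smul, neg_smul, map_neg, neg_neg, LinearMap.add_apply, LinearMap.neg_apply, LinearMap.smul_apply] at e1 e2
    exact cancel_AB (k := k) _ _ (by linear_combination (norm := module) e1)
      (by linear_combination (norm := module) e2)
  have c0 : ∀ x1 x2, w0 x1 x2 = a.m0 x1 (φ0 x2) + a.m0 (φ0 x1) x2 - φ0 (a.m0 x1 x2) := by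
    intro x1 x2
    have := (key0 x1 x2).1
    linear_combination (norm := module) this
  have c1 : ∀ x1 y1, w1 x1 y1 = a.m1 x1 (φ1 y1) + a.m1 (φ0 x1) y1 - φ1 (a.m1 x1 y1) := by
    intro x1 y1
    have := (key1 x1 y1).1
    linear_combination (norm := module) this
  have c2 : ∀ y1 y2, w2 y1 y2 = a.br y1 (φ1 y2) + a.br (φ1 y1) y2 - φ0 (a.br y1 y2) := by
    intro y1 y2
    have := (key2 y1 y2).1
    linear_combination (norm := module) this
  refine ⟨c0, c1, c2, ?_, ?_, ?_⟩
  · intro x1 x2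
    have h := (key0 x1 x2).2
    rw [c0 x1 x2] at h
    simp only [map_add, map_sub] at h
    linear_combination (norm := module) -h
  · intro x y
    have h := (key1 x y).2
    rw [c1 x y] at h
    simp only [map_add, map_sub] at h
    linear_combination (norm := module) -h
  · intro y1 y2
    have h := (key2 y1 y2).2
    rw [c2 y1 y2] at h
    simp only [map_add, map_sub] at h
    linear_combination (norm := module) -h
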